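/- Let X be a binomial random variable with k trials and success probability p ∈ (0,1), and let m be a natural number with m ≤ k·p. Then P(X < m) ≤ exp(−(kp − m)²/(2pk)). -/
import Mathlib


open Finset

lemma exp_neg_le_quadratic {s : ℝ} (hs : 0 ≤ s) :
    Real.exp (-s) ≤ 1 - s + s ^ 2 / 2 := by
  have h1 : 1 + s + s ^ 2 / 2 + s ^ 3 / 6 ≤ Real.exp s := by
    have h := Real.sum_le_exp_of_nonneg hs 4
    simp [Finset.sum_range_succ, Nat.factorial] at h
    nlinarith [h]
  have hq : (0:ℝ) < 1 - s + s ^ 2 / 2 := by nlinarith [sq_nonneg (s - 1)]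
  have h2 : 1 ≤ Real.exp s * (1 - s + s ^ 2 / 2) := by
    have : (1 + s + s ^ 2 / 2 + s ^ 3 / 6) * (1 - s + s ^ 2 / 2) ≤
        Real.exp s * (1 - s + s ^ 2 / 2) :=
      mul_le_mul_of_nonneg_right h1 hq.le
    nlinarith [pow_nonneg hs 3, pow_nonneg hs 4, pow_nonneg hs 5]
  have h3 : Real.exp (-s) * Real.exp s = 1 := by
    rw [← Real.exp_add]; simp
  nlinarith [Real.exp_pos s, Real.exp_pos (-s)]

/-- Chernoff lower-tail bound for the binomial distribution: if
`X ~ Binomial(k, p)` with `p ∈ (0,1)`, `k > 0`, and `m ≤ k·p`, then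
`P(X < m) = ∑_{i<m} C(k,i) p^i (1−p)^{k−i} ≤ exp(−(kp − m)²/(2pk))`. -/
theorem binomial_chernoff_lower_tail (k m : ℕ) (p : ℝ)
    (hk : 0 < k) (hp0 : 0 < p) (hp1 : p < 1) (hm : (m : ℝ) ≤ k * p) :
    ∑ i ∈ range m, (k.choose i : ℝ) * p ^ i * (1 - p) ^ (k - i) ≤
      Real.exp (-((k * p - m) ^ 2 / (2 * p * k))) := by
  have hk' : (0:ℝ) < k := by exact_mod_cast hk
  set a : ℝ := k * p with ha_def
  have ha : 0 < a := by positivity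
  set t : ℝ := (a - m) / a with ht_def
  have ht : 0 ≤ t := div_nonneg (by linarith) ha.le
  have hmk : m ≤ k := by
    have h1 : (m:ℝ) ≤ k := le_trans hm (by nlinarith)
    exact_mod_cast h1
  have hbasepos : (0:ℝ) ≤ p * Real.exp (-t) + (1 - p) := by
    have := Real.exp_pos (-t)
    nlinarith
  calc ∑ i ∈ range m, (k.choose i : ℝ) * p ^ i * (1 - p) ^ (k - i)
      ≤ ∑ i ∈ range m, Real.exp (t * m) *
          ((k.choose i : ℝ) * (p * Real.exp (-t)) ^ i * (1 - p) ^ (k - i)) := by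
        apply Finset.sum_le_sum
        intro i hi
        have him : i ≤ m := (Finset.mem_range.mp hi).le
        have him' : (i:ℝ) ≤ m := by exact_mod_cast him
        have hrw : Real.exp (t * m) *
            ((k.choose i : ℝ) * (p * Real.exp (-t)) ^ i * (1 - p) ^ (k - i)) =
            (Real.exp (t * m) * Real.exp (-t) ^ i) *
              ((k.choose i : ℝ) * p ^ i * (1 - p) ^ (k - i)) := by
          rw [mul_pow]; ring
        rw [hrw]
        have hone : 1 ≤ Real.exp (t * m) * Real.exp (-t) ^ i := by
          rw [← Real.exp_nat_mul, ← Real.exp_add, ← Real.exp_zero]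
          apply Real.exp_le_exp.mpr
          have : (i:ℝ) * -t = -(t * i) := by ring
          rw [this]
          nlinarith
        have hterm : (0:ℝ) ≤ (k.choose i : ℝ) * p ^ i * (1 - p) ^ (k - i) :=
          mul_nonneg (mul_nonneg (Nat.cast_nonneg _) (pow_nonneg hp0.le _))
            (pow_nonneg (by linarith) _)
        nlinarith
    _ = Real.exp (t * m) *
          ∑ i ∈ range m, ((k.choose i : ℝ) * (p * Real.exp (-t)) ^ i * (1 - p) ^ (k - i)) := by
        rw [Finset.mul_sum]
    _ ≤ Real.exp (t * m) *
          ∑ i ∈ range (k + 1),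
            ((k.choose i : ℝ) * (p * Real.exp (-t)) ^ i * (1 - p) ^ (k - i)) := by
        apply mul_le_mul_of_nonneg_left _ (Real.exp_pos _).le
        apply Finset.sum_le_sum_of_subset_of_nonneg
        · exact Finset.range_subset_range.mpr (by omega)
        · intro i _ _
          exact mul_nonneg (mul_nonneg (Nat.cast_nonneg _)
            (pow_nonneg (by positivity) _)) (pow_nonneg (by linarith) _)
    _ = Real.exp (t * m) * (p * Real.exp (-t) + (1 - p)) ^ k := by
        rw [add_pow]
        congr 1
        apply Finset.sum_congr rfl
        intro i _
        ring
    _ ≤ Real.exp (t * m) * Real.exp ((k:ℝ) * (p * (Real.exp (-t) - 1))) := by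
        apply mul_le_mul_of_nonneg_left _ (Real.exp_pos _).le
        rw [Real.exp_nat_mul]
        apply pow_le_pow_left₀ hbasepos
        have := Real.add_one_le_exp (p * (Real.exp (-t) - 1))
        linarith
    _ = Real.exp (t * m + (k:ℝ) * (p * (Real.exp (-t) - 1))) := by
        rw [← Real.exp_add]
    _ ≤ Real.exp (-((k * p - m) ^ 2 / (2 * p * k))) := by
        apply Real.exp_le_exp.mpr
        have hq := exp_neg_le_quadratic ht
        have hstep : t * m + (k:ℝ) * (p * (Real.exp (-t) - 1)) ≤
            t * m + a * (-t + t ^ 2 / 2) := by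
          have : (k:ℝ) * (p * (Real.exp (-t) - 1)) = a * (Real.exp (-t) - 1) := by
            rw [ha_def]; ring
          rw [this]
          have : Real.exp (-t) - 1 ≤ -t + t ^ 2 / 2 := by linarith
          nlinarith
        have heq : t * m + a * (-t + t ^ 2 / 2) = -((a - m) ^ 2 / (2 * a)) := by
          rw [ht_def]
          field_simp
          ring
        have h2 : -((k * p - m : ℝ) ^ 2 / (2 * p * k)) = -((a - m) ^ 2 / (2 * a)) := by
          rw [ha_def]
          ring_nf
        linarith
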